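/- Let K be a field and n ≥ 3. Let H_1 and H_2 be linear hyperplanes of M_n(K). Then there exists an invertible matrix P ∈ H_1 such that P⁻¹ ∈ H_2. -/

import Mathlib

/-!
A hyperplane of `M_n(K)` is `{X | tr (A X) = 0}` for some `A ≠ 0`. Bringing `A₁` to diagonal
form by row and column operations, it suffices to find an invertible `P` with zero diagonal (such
a `P` lies in every hyperplane `tr (D X) = 0` with `D` diagonal) and `tr (B P⁻¹) = 0`, for a given
`B ≠ 0`. These come in affine lines: if `S` and `S E` have zero diagonal and `E² = 0`, then
`(S (1 + t E))⁻¹ = (1 - t E) S⁻¹`, so `tr (B (S (1 + t E))⁻¹)` is affine in `t` and vanishes for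
some `t` as soon as its slope `-tr (B E S⁻¹)` is nonzero. With `S` the permutation matrix `Pσ` of
a derangement `σ`, or `S = Pσ (1 + E_{σ²m, m})`, suitable `E` give the slopes `B m m` and
`B m m - B m (σ² m)`. With at least three indices, `σ² m` can be any index other than `m`, so
some slope is nonzero.
-/

open Matrix Equiv

theorem one_add_mul_one_sub_of_mul_self_eq_zero {R : Type*} [Ring R] {N : R} (hN : N * N = 0) :
    (1 + N) * (1 - N) = 1 := by
  rw [add_mul, mul_sub, mul_sub, one_mul, mul_one, one_mul, hN, sub_zero, sub_add_cancel]

theorem Equiv.Perm.exists_apply_ne_self_and_apply_apply_eq {ι : Type*} [Fintype ι]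
    (hι : 3 ≤ Fintype.card ι) {a b : ι} (hab : a ≠ b) :
    ∃ σ : Perm ι, (∀ x, σ x ≠ x) ∧ σ (σ a) = b := by
  obtain ⟨k, hk⟩ : ∃ k, Fintype.card ι = k + 3 := ⟨Fintype.card ι - 3, by omega⟩
  let e₀ := (Fintype.equivFinOfCardEq hk).symm
  obtain ⟨τ, hτ⟩ := Perm.exists_extending_pair ![e₀ 0, e₀ 2] ![a, b]
    (by
      intro i j
      fin_cases i <;> fin_cases j <;>
        simp [Fin.ext_iff, Nat.mod_eq_of_lt (show 2 < k + 3 by omega)])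
    (by intro i j; fin_cases i <;> fin_cases j <;> simp [hab, hab.symm])
  let e := e₀.trans τ
  have h0 : e.symm a = 0 := e.symm_apply_eq.mpr (hτ 0).symm
  refine ⟨e.permCongr (finRotate (k + 3)), fun x => ?_, ?_⟩
  · rw [permCongr_apply, Ne, ← e.eq_symm_apply]
    exact Perm.mem_support.mp (by rw [support_finRotate]; exact Finset.mem_univ _)
  · rw [permCongr_apply, permCongr_apply, symm_apply_apply, h0, finRotate_apply, finRotate_apply]
    exact hτ 1

theorem Submodule.exists_ne_zero_ker_le_of_finrank_add_one_eq {K V : Type*} [Field K]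
    [AddCommGroup V] [Module K V] [FiniteDimensional K V] {H : Submodule K V}
    (hH : Module.finrank K H + 1 = Module.finrank K V) :
    ∃ f : V →ₗ[K] K, f ≠ 0 ∧ LinearMap.ker f ≤ H := by
  have hHtop : H ≠ ⊤ := fun h => by rw [h, finrank_top] at hH; omega
  obtain ⟨f, hf, hHf⟩ := H.exists_le_ker_of_lt_top (lt_top_iff_ne_top.mpr hHtop)
  have hker : Module.finrank K (LinearMap.ker f) < Module.finrank K V :=
    Submodule.finrank_lt (fun h => hf (LinearMap.ker_eq_top.mp h))
  exact ⟨f, hf, (Submodule.eq_of_le_of_finrank_le hHf (by omega)).ge⟩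

namespace Matrix

section Semiring

variable {ι R : Type*} [DecidableEq ι]

theorem diag_permMatrix_eq_zero [Zero R] [One R] {σ : Perm ι} (hσ : ∀ x, σ x ≠ x) :
    (σ.permMatrix R).diag = 0 := by
  ext a
  simp [hσ a]

variable [Fintype ι] [NonAssocSemiring R]

theorem permMatrix_mul_single (σ : Perm ι) (i j : ι) (c : R) :
    σ.permMatrix R * single i j c = single (σ.symm i) j c := by
  ext a b
  simp [PEquiv.toMatrix_toPEquiv_mul, single_apply, Equiv.symm_apply_eq, @eq_comm _ i]

theorem single_mul_permMatrix (σ : Perm ι) (i j : ι) (c : R) :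
    single i j c * σ.permMatrix R = single i (σ j) c := by
  ext a b
  simp [PEquiv.mul_toMatrix_toPEquiv, single_apply, Equiv.eq_symm_apply]

theorem permMatrix_mul_permMatrix_inv (σ : Perm ι) :
    σ.permMatrix R * σ⁻¹.permMatrix R = 1 := by
  rw [← permMatrix_mul, inv_mul_cancel, permMatrix_one]

theorem trace_diagonal_mul_of_diag_eq_zero (D : ι → R) {P : Matrix ι ι R} (hP : P.diag = 0) :
    trace (diagonal D * P) = 0 :=
  Finset.sum_eq_zero fun i _ => by
    rw [diag_apply, diagonal_mul, show P i i = 0 from congrFun hP i, mul_zero]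

end Semiring

theorem exists_trace_mul_eq {ι R : Type*} [Fintype ι] [DecidableEq ι] [CommSemiring R]
    (f : Matrix ι ι R →ₗ[R] R) : ∃ A : Matrix ι ι R, ∀ X, trace (A * X) = f X := by
  refine ⟨of fun i k => f (single k i 1), fun X => ?_⟩
  conv_rhs => rw [matrix_eq_sum_single X]
  simp only [map_sum, trace, diag, mul_apply, of_apply]
  rw [Finset.sum_comm]
  refine Finset.sum_congr rfl fun i _ => Finset.sum_congr rfl fun k _ => ?_
  rw [show single i k (X i k) = X i k • single i k 1 by rw [smul_single, smul_eq_mul, mul_one],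
    map_smul, smul_eq_mul, mul_comm]

variable {ι K : Type*} [Fintype ι] [DecidableEq ι] [Field K]

theorem _root_.Submodule.exists_ne_zero_forall_trace_mul_eq_zero_mem
    {H : Submodule K (Matrix ι ι K)}
    (hH : Module.finrank K H + 1 = Module.finrank K (Matrix ι ι K)) :
    ∃ A : Matrix ι ι K, A ≠ 0 ∧ ∀ X, trace (A * X) = 0 → X ∈ H := by
  obtain ⟨f, hf, hker⟩ := Submodule.exists_ne_zero_ker_le_of_finrank_add_one_eq hH
  obtain ⟨A, hA⟩ := exists_trace_mul_eq f
  refine ⟨A, fun h => hf (LinearMap.ext fun X => ?_), fun X hX => hker ?_⟩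
  · rw [← hA, h, zero_mul, trace_zero, LinearMap.zero_apply]
  · rwa [LinearMap.mem_ker, ← hA]

theorem exists_isUnit_eq_mul_diagonal_mul (A : Matrix ι ι K) :
    ∃ (U V : Matrix ι ι K) (D : ι → K), IsUnit U ∧ IsUnit V ∧ A = U * diagonal D * V := by
  obtain ⟨L, L', D, hA⟩ := Pivot.exists_list_transvec_mul_diagonal_mul_list_transvec A
  have hunit (L : List (TransvectionStruct ι K)) :
      IsUnit (L.map TransvectionStruct.toMatrix).prod :=
    List.prod_isUnit fun M hM => by
      obtain ⟨t, -, rfl⟩ := List.mem_map.mp hM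
      simp [isUnit_iff_isUnit_det]
  exact ⟨_, _, D, hunit L, hunit L', hA⟩

def ZeroDiagSolvable (B : Matrix ι ι K) : Prop :=
  ∃ P : Matrix ι ι K, P.diag = 0 ∧ IsUnit P ∧ trace (B * P⁻¹) = 0

theorem zeroDiagSolvable_of_trace_mul_ne_zero {B S T E : Matrix ι ι K} (hST : S * T = 1)
    (hS : S.diag = 0) (hE : E * E = 0) (hSE : (S * E).diag = 0)
    (hB : trace (B * E * T) ≠ 0) : ZeroDiagSolvable B := by
  set t := trace (B * T) / trace (B * E * T)
  have hinv : S * (1 + t • E) * ((1 - t • E) * T) = 1 := by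
    rw [mul_assoc, ← mul_assoc (1 + t • E), one_add_mul_one_sub_of_mul_self_eq_zero (by
      rw [smul_mul_smul_comm, hE, smul_zero]), one_mul, hST]
  refine ⟨S * (1 + t • E), ?_, IsUnit.of_mul_eq_one _ hinv, ?_⟩
  · rw [mul_add, mul_one, mul_smul_comm, diag_add, diag_smul, hS, hSE, smul_zero, add_zero]
  · rw [inv_eq_right_inv hinv, sub_mul, one_mul, mul_sub, trace_sub, smul_mul_assoc,
      mul_smul_comm, trace_smul, smul_eq_mul, ← mul_assoc, div_mul_cancel₀ _ hB, sub_self]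

theorem zeroDiagSolvable_of_diag_ne_zero {B : Matrix ι ι K} {σ : Perm ι}
    (hσ : ∀ x, σ x ≠ x) {m : ι} (hm : σ (σ m) ≠ m) (hB : B m m ≠ 0) : ZeroDiagSolvable B := by
  have hmσ : σ.symm m ≠ σ m := fun h => hm (by rw [← h, apply_symm_apply])
  refine zeroDiagSolvable_of_trace_mul_ne_zero (permMatrix_mul_permMatrix_inv σ)
    (diag_permMatrix_eq_zero hσ) (E := single m (σ m) 1)
    (single_mul_single_of_ne _ _ _ _ (hσ m) _) ?_ ?_
  · rw [permMatrix_mul_single, diag_single_of_ne _ _ _ hmσ]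
  · rw [mul_assoc, single_mul_permMatrix, Perm.coe_inv, symm_apply_apply, trace_mul_single]
    simpa using hB

theorem zeroDiagSolvable_of_diag_ne_entry {B : Matrix ι ι K} {σ : Perm ι}
    (hσ : ∀ x, σ x ≠ x) {m : ι} (hm : σ (σ m) ≠ m) (hB : B m m ≠ B m (σ (σ m))) :
    ZeroDiagSolvable B := by
  have hmσ : σ.symm m ≠ σ m := fun h => hm (by rw [← h, apply_symm_apply])
  have hpσ : σ m ≠ σ (σ m) := fun h => hσ m (σ.injective h).symm
  set p := σ (σ m)
  set N : Matrix ι ι K := single p m 1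
  set E : Matrix ι ι K := single m (σ m) 1 - single p (σ m) 1
  have hST : σ.permMatrix K * (1 + N) * ((1 - N) * σ⁻¹.permMatrix K) = 1 := by
    rw [mul_assoc, ← mul_assoc (1 + N), one_add_mul_one_sub_of_mul_self_eq_zero
      (single_mul_single_of_ne _ _ _ _ hm.symm _), one_mul, permMatrix_mul_permMatrix_inv]
  have hNE : N * E = single p (σ m) 1 := by
    rw [mul_sub, single_mul_single_same, single_mul_single_of_ne _ _ _ _ hm.symm, mul_one,
      sub_zero]
  have hEN : E * N = 0 := by
    rw [sub_mul, single_mul_single_of_ne _ _ _ _ hpσ, single_mul_single_of_ne _ _ _ _ hpσ,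
      sub_zero]
  refine zeroDiagSolvable_of_trace_mul_ne_zero hST ?_ (E := E) ?_ ?_ ?_
  · rw [mul_add, mul_one, permMatrix_mul_single, symm_apply_apply, diag_add,
      diag_permMatrix_eq_zero hσ, diag_single_of_ne _ _ _ (hσ m), add_zero]
  · simp only [E, sub_mul, mul_sub, single_mul_single_of_ne _ _ _ _ (hσ m),
      single_mul_single_of_ne _ _ _ _ hpσ, sub_zero]
  · rw [mul_assoc, add_mul, one_mul, hNE, sub_add_cancel, permMatrix_mul_single,
      diag_single_of_ne _ _ _ hmσ]
  · rw [mul_assoc B, ← mul_assoc E, mul_sub, mul_one, hEN, sub_zero, sub_mul,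
      single_mul_permMatrix, single_mul_permMatrix, Perm.coe_inv, symm_apply_apply, mul_sub,
      trace_sub, trace_mul_single, trace_mul_single]
    simpa [sub_eq_zero] using hB

theorem zeroDiagSolvable_of_ne_zero (hι : 3 ≤ Fintype.card ι) {B : Matrix ι ι K} (hB : B ≠ 0) :
    ZeroDiagSolvable B := by
  by_cases hdiag : ∃ m, B m m ≠ 0
  · obtain ⟨m, hm⟩ := hdiag
    have : Nontrivial ι := Fintype.one_lt_card_iff_nontrivial.mp (by omega)
    obtain ⟨c, hc⟩ := exists_ne m
    obtain ⟨σ, hσ, hσm⟩ := Perm.exists_apply_ne_self_and_apply_apply_eq hι hc.symm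
    exact zeroDiagSolvable_of_diag_ne_zero hσ (hσm ▸ hc) hm
  · push Not at hdiag
    obtain ⟨a, b, hab⟩ : ∃ a b, B a b ≠ 0 := by
      by_contra! h
      exact hB (ext h)
    have hne : a ≠ b := fun h => hab (h ▸ hdiag a)
    obtain ⟨σ, hσ, hσa⟩ := Perm.exists_apply_ne_self_and_apply_apply_eq hι hne
    refine zeroDiagSolvable_of_diag_ne_entry hσ (hσa ▸ hne.symm) ?_
    rwa [hσa, hdiag a, ne_comm]

theorem exists_isUnit_trace_mul_eq_zero_trace_mul_inv_eq_zero (hι : 3 ≤ Fintype.card ι)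
    (A : Matrix ι ι K) {B : Matrix ι ι K} (hB : B ≠ 0) :
    ∃ P : Matrix ι ι K, IsUnit P ∧ trace (A * P) = 0 ∧ trace (B * P⁻¹) = 0 := by
  obtain ⟨U, V, D, hU, hV, rfl⟩ := exists_isUnit_eq_mul_diagonal_mul A
  have hVBU : V * B * U ≠ 0 := by
    rwa [Ne, hU.mul_left_eq_zero, hV.mul_right_eq_zero]
  obtain ⟨P, hPdiag, hP, hPB⟩ := zeroDiagSolvable_of_ne_zero hι hVBU
  have hUdet := (isUnit_iff_isUnit_det U).mp hU
  have hVdet := (isUnit_iff_isUnit_det V).mp hV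
  refine ⟨V⁻¹ * P * U⁻¹, ((isUnit_nonsing_inv_iff.mpr hV).mul hP).mul
    (isUnit_nonsing_inv_iff.mpr hU), ?_, ?_⟩
  · rw [show U * diagonal D * V * (V⁻¹ * P * U⁻¹) = U * (diagonal D * P) * U⁻¹ by
      simp only [mul_assoc, mul_nonsing_inv_cancel_left _ _ hVdet], trace_conj hU,
      trace_diagonal_mul_of_diag_eq_zero D hPdiag]
  · rw [mul_inv_rev, mul_inv_rev, nonsing_inv_nonsing_inv _ hUdet,
      nonsing_inv_nonsing_inv _ hVdet, ← mul_assoc, ← mul_assoc, trace_mul_comm, ← mul_assoc,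
      ← mul_assoc, hPB]

end Matrix

theorem exists_invertible_in_hyperplane_with_inverse_in_hyperplane (K : Type*) [Field K]
    (n : ℕ) (hn : 3 ≤ n) (H₁ H₂ : Submodule K (Matrix (Fin n) (Fin n) K))
    (hH₁ : Module.finrank K H₁ = n ^ 2 - 1) (hH₂ : Module.finrank K H₂ = n ^ 2 - 1) :
    ∃ P : Matrix (Fin n) (Fin n) K, P ∈ H₁ ∧ IsUnit P ∧ P⁻¹ ∈ H₂ := by
  have hdim : n ^ 2 - 1 + 1 = Module.finrank K (Matrix (Fin n) (Fin n) K) := by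
    rw [Module.finrank_matrix, Module.finrank_self, Fintype.card_fin, mul_one, ← sq,
      Nat.sub_add_cancel (Nat.one_le_pow _ _ (by omega))]
  obtain ⟨A₁, -, hA₁⟩ := Submodule.exists_ne_zero_forall_trace_mul_eq_zero_mem (hH₁ ▸ hdim)
  obtain ⟨A₂, hA₂, hmem₂⟩ := Submodule.exists_ne_zero_forall_trace_mul_eq_zero_mem (hH₂ ▸ hdim)
  obtain ⟨P, hP, h₁, h₂⟩ := exists_isUnit_trace_mul_eq_zero_trace_mul_inv_eq_zero
    (by rwa [Fintype.card_fin]) A₁ hA₂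
  exact ⟨P, hA₁ P h₁, hP, hmem₂ _ h₂⟩
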